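/- arXiv:2305.08172 — 2 statements merged into one kernel-verified Lean document; each statement's English description precedes it below -/
import Mathlib

section
/- For finite sets A, B, C with nonempty pairwise unions, the Jaccard distance d(A,B) = 1 - J(A,B) satisfies the triangle inequality: d(A,C) ≤ d(A,B) + d(B,C). -/
/-- The Jaccard index between two finite sets. -/
noncomputable def jaccard (A B : Finset ℕ) : ℝ := (A ∩ B).card / (A ∪ B).card

/-- The Jaccard distance between two finite sets. -/
noncomputable def jaccardDist (A B : Finset ℕ) : ℝ := 1 - jaccard A B

set_option maxHeartbeats 2000000 in
/-- triangle inequality for the Jaccard distance on nonempty finite sets. -/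
theorem jaccardDist_triangle (A B C : Finset ℕ)
    (hA : A.Nonempty) (hB : B.Nonempty) (hC : C.Nonempty) :
    jaccardDist A C ≤ jaccardDist A B + jaccardDist B C := by
  classical
  -- atoms of the Venn diagram
  set a : ℕ := (A \ (B ∪ C)).card with ha
  set b : ℕ := (B \ (A ∪ C)).card with hb
  set c : ℕ := (C \ (A ∪ B)).card with hc
  set p : ℕ := ((A ∩ B) \ C).card with hp
  set q : ℕ := ((A ∩ C) \ B).card with hq
  set r : ℕ := ((B ∩ C) \ A).card with hr
  set s : ℕ := (A ∩ B ∩ C).card with hs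
  -- intersection cards
  have h1 : (A ∩ B).card = p + s := by
    rw [hp, hs, Finset.card_sdiff_add_card_inter]
  have h2 : (B ∩ C).card = r + s := by
    have e : (B ∩ C) ∩ A = A ∩ B ∩ C := by ext x; simp only [Finset.mem_inter, Finset.mem_union, Finset.mem_sdiff]; tauto
    rw [hr, hs, ← e, Finset.card_sdiff_add_card_inter]
  have h3 : (A ∩ C).card = q + s := by
    have e : (A ∩ C) ∩ B = A ∩ B ∩ C := by ext x; simp only [Finset.mem_inter, Finset.mem_union, Finset.mem_sdiff]; tauto
    rw [hq, hs, ← e, Finset.card_sdiff_add_card_inter]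
  -- union cards via the total universe
  set n : ℕ := (A ∪ B ∪ C).card with hn
  have h4 : c + (A ∪ B).card = n := by
    have e : (A ∪ B ∪ C) \ (A ∪ B) = C \ (A ∪ B) := by ext x; simp only [Finset.mem_inter, Finset.mem_union, Finset.mem_sdiff]; tauto
    rw [hc, ← e, hn, Finset.card_sdiff_add_card_eq_card Finset.subset_union_left]
  have h5 : a + (B ∪ C).card = n := by
    have hsub : B ∪ C ⊆ A ∪ B ∪ C := by intro x; simp; tauto
    have e : (A ∪ B ∪ C) \ (B ∪ C) = A \ (B ∪ C) := by ext x; simp only [Finset.mem_inter, Finset.mem_union, Finset.mem_sdiff]; tauto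
    rw [ha, ← e, hn, Finset.card_sdiff_add_card_eq_card hsub]
  have h6 : b + (A ∪ C).card = n := by
    have hsub : A ∪ C ⊆ A ∪ B ∪ C := by intro x; simp; tauto
    have e : (A ∪ B ∪ C) \ (A ∪ C) = B \ (A ∪ C) := by ext x; simp only [Finset.mem_inter, Finset.mem_union, Finset.mem_sdiff]; tauto
    rw [hb, ← e, hn, Finset.card_sdiff_add_card_eq_card hsub]
  -- the total is the sum of the atoms
  have hAcard : A.card = a + q + p + s := by
    have e1 := Finset.card_sdiff_add_card_inter A (B ∪ C)
    have e2 := Finset.card_sdiff_add_card_inter (A ∩ (B ∪ C)) B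
    have e3 : (A ∩ (B ∪ C)) \ B = (A ∩ C) \ B := by ext x; simp only [Finset.mem_inter, Finset.mem_union, Finset.mem_sdiff]; tauto
    have e4 : (A ∩ (B ∪ C)) ∩ B = A ∩ B := by ext x; simp only [Finset.mem_inter, Finset.mem_union, Finset.mem_sdiff]; tauto
    rw [e3, e4] at e2
    omega
  have hBAcard : (B \ A).card = b + r := by
    have e1 := Finset.card_sdiff_add_card_inter (B \ A) C
    have e2 : (B \ A) \ C = B \ (A ∪ C) := by ext x; simp only [Finset.mem_inter, Finset.mem_union, Finset.mem_sdiff]; tauto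
    have e3 : (B \ A) ∩ C = (B ∩ C) \ A := by ext x; simp only [Finset.mem_inter, Finset.mem_union, Finset.mem_sdiff]; tauto
    rw [e2, e3] at e1
    omega
  have h7 : n = a + b + c + p + q + r + s := by
    have e1 : (A ∪ B) \ A = B \ A := by ext x; simp only [Finset.mem_inter, Finset.mem_union, Finset.mem_sdiff]; tauto
    have e2 := Finset.card_sdiff_add_card_eq_card (Finset.subset_union_left (s₁ := A) (s₂ := B))
    rw [e1] at e2
    omega
  -- positivity of the unions
  have hu1 : 0 < (A ∪ B).card := Finset.card_pos.2 (hA.mono Finset.subset_union_left)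
  have hu2 : 0 < (B ∪ C).card := Finset.card_pos.2 (hB.mono Finset.subset_union_left)
  have hu3 : 0 < (A ∪ C).card := Finset.card_pos.2 (hA.mono Finset.subset_union_left)
  -- pass to the reals
  have ru1 : (0:ℝ) < ((A ∪ B).card : ℝ) := by exact_mod_cast hu1
  have ru2 : (0:ℝ) < ((B ∪ C).card : ℝ) := by exact_mod_cast hu2
  have ru3 : (0:ℝ) < ((A ∪ C).card : ℝ) := by exact_mod_cast hu3
  have eu1 : ((A ∪ B).card : ℝ) = a + b + p + q + r + s := by
    have : (A ∪ B).card = a + b + p + q + r + s := by omega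
    exact_mod_cast congrArg (Nat.cast : ℕ → ℝ) this
  have eu2 : ((B ∪ C).card : ℝ) = b + c + p + q + r + s := by
    have : (B ∪ C).card = b + c + p + q + r + s := by omega
    exact_mod_cast congrArg (Nat.cast : ℕ → ℝ) this
  have eu3 : ((A ∪ C).card : ℝ) = a + c + p + q + r + s := by
    have : (A ∪ C).card = a + c + p + q + r + s := by omega
    exact_mod_cast congrArg (Nat.cast : ℕ → ℝ) this
  have ei1 : ((A ∩ B).card : ℝ) = p + s := by exact_mod_cast congrArg (Nat.cast : ℕ → ℝ) h1
  have ei2 : ((B ∩ C).card : ℝ) = r + s := by exact_mod_cast congrArg (Nat.cast : ℕ → ℝ) h2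
  have ei3 : ((A ∩ C).card : ℝ) = q + s := by exact_mod_cast congrArg (Nat.cast : ℕ → ℝ) h3
  have hna : (0:ℝ) ≤ (a:ℝ) := Nat.cast_nonneg a
  have hnb : (0:ℝ) ≤ (b:ℝ) := Nat.cast_nonneg b
  have hnc : (0:ℝ) ≤ (c:ℝ) := Nat.cast_nonneg c
  have hnp : (0:ℝ) ≤ (p:ℝ) := Nat.cast_nonneg p
  have hnq : (0:ℝ) ≤ (q:ℝ) := Nat.cast_nonneg q
  have hnr : (0:ℝ) ≤ (r:ℝ) := Nat.cast_nonneg r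
  have hns : (0:ℝ) ≤ (s:ℝ) := Nat.cast_nonneg s
  -- the key cubic inequality
  have key : ((A ∩ B).card : ℝ) * (B ∪ C).card * (A ∪ C).card
      + ((B ∩ C).card : ℝ) * (A ∪ B).card * (A ∪ C).card
      ≤ ((A ∪ B).card : ℝ) * (B ∪ C).card * (A ∪ C).card
      + ((A ∩ C).card : ℝ) * (A ∪ B).card * (B ∪ C).card := by
    rw [ei1, ei2, ei3, eu1, eu2, eu3]
    have cert : (0:ℝ) ≤ 2*q*((a:ℝ)+b+p+q+r+s)*((b:ℝ)+c+p+q+r+s)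
        + c*((a:ℝ)+b+q+r)*((b:ℝ)+c+p+q+r+s)
        + a*((b:ℝ)+c+p+q)*((a:ℝ)+b+p+q+r+s)
        + b*((p:ℝ)+s)*((b:ℝ)+c+p+q+r+s)
        + b*((r:ℝ)+s)*((a:ℝ)+b+p+q+r+s) := by positivity
    have hident : ((a:ℝ)+b+p+q+r+s) * ((b:ℝ)+c+p+q+r+s) * ((a:ℝ)+c+p+q+r+s)
        + ((q:ℝ)+s) * ((a:ℝ)+b+p+q+r+s) * ((b:ℝ)+c+p+q+r+s)
        - (((p:ℝ)+s) * ((b:ℝ)+c+p+q+r+s) * ((a:ℝ)+c+p+q+r+s)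
          + ((r:ℝ)+s) * ((a:ℝ)+b+p+q+r+s) * ((a:ℝ)+c+p+q+r+s))
        = 2*q*((a:ℝ)+b+p+q+r+s)*((b:ℝ)+c+p+q+r+s)
        + c*((a:ℝ)+b+q+r)*((b:ℝ)+c+p+q+r+s)
        + a*((b:ℝ)+c+p+q)*((a:ℝ)+b+p+q+r+s)
        + b*((p:ℝ)+s)*((b:ℝ)+c+p+q+r+s)
        + b*((r:ℝ)+s)*((a:ℝ)+b+p+q+r+s) := by ring
    linarith
  -- conclude
  unfold jaccardDist jaccard
  set x : ℝ := ((A ∩ B).card : ℝ) / (A ∪ B).card with hxdef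
  set y : ℝ := ((B ∩ C).card : ℝ) / (B ∪ C).card with hydef
  set z : ℝ := ((A ∩ C).card : ℝ) / (A ∪ C).card with hzdef
  have hx : x * (A ∪ B).card = (A ∩ B).card := div_mul_cancel₀ _ ru1.ne'
  have hy : y * (B ∪ C).card = (B ∩ C).card := div_mul_cancel₀ _ ru2.ne'
  have hz : z * (A ∪ C).card = (A ∩ C).card := div_mul_cancel₀ _ ru3.ne'
  have habc : (0:ℝ) < ((A ∪ B).card : ℝ) * (B ∪ C).card * (A ∪ C).card := by positivity
  have hfin : (x + y - 1 - z) * (((A ∪ B).card : ℝ) * (B ∪ C).card * (A ∪ C).card)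
      = (((A ∩ B).card : ℝ) * (B ∪ C).card * (A ∪ C).card
        + ((B ∩ C).card : ℝ) * (A ∪ B).card * (A ∪ C).card)
      - (((A ∪ B).card : ℝ) * (B ∪ C).card * (A ∪ C).card
        + ((A ∩ C).card : ℝ) * (A ∪ B).card * (B ∪ C).card) := by
    linear_combination (((B ∪ C).card : ℝ) * (A ∪ C).card) * hx
      + (((A ∪ B).card : ℝ) * (A ∪ C).card) * hy
      - (((A ∪ B).card : ℝ) * (B ∪ C).card) * hz
  have hprod : (x + y - 1 - z) * (((A ∪ B).card : ℝ) * (B ∪ C).card * (A ∪ C).card) ≤ 0 := by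
    rw [hfin]; linarith
  have hxyz : x + y - 1 - z ≤ 0 :=
    le_of_mul_le_mul_right (by rw [zero_mul]; exact hprod) habc
  linarith
end

section
/- Suppose the true signal regions I*_1,...,I*_ℓ in {1,...,p} are well-separated: the minimum gap G_min between any two of them is at least the maximum length L_max of any of them. Then for any partition S of {1,...,p} into consecutive segments each of length at most 2^s with 2^s ≤ G_min / 2, the minimum covers (in S) of distinct signal regions are disjoint and non-adjacent. -/
/-- suppose the true signal regions `I*₁,…,I*_ℓ` (disjoint intervals in
`{1,…,p}`) are well-separated: any two of them are at distance at least `G ≥ L`, where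
`L` bounds all their lengths. Then for any partition of `{1,…,p}` into consecutive
segments of length at most `2^s` with `2^s ≤ G/2` (i.e. `2^{s+1} ≤ G`), the minimum
covers (the segments intersecting a region) of distinct signal regions are disjoint
and non-adjacent: any segment meeting `I*_i` and any segment meeting `I*_j` (`i ≠ j`)
have indices more than `1` apart, so at least one segment lies strictly between them. -/
theorem min_covers_disjoint_nonadjacent (p s ℓ Snum G L : ℕ)
    (seg : Fin Snum → Finset ℕ) (a b : Fin Snum → ℕ)
    (hseg : ∀ t, seg t = Finset.Icc (a t) (b t)) (hab : ∀ t, a t ≤ b t)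
    (hconsec : ∀ t : Fin Snum, ∀ ht : t.val + 1 < Snum, a ⟨t.val + 1, ht⟩ = b t + 1)
    (hsegcard : ∀ t, (seg t).card ≤ 2 ^ s)
    (hcover : Finset.univ.biUnion seg = Finset.Icc 1 p)
    (Istar : Fin ℓ → Finset ℕ)
    (hIint : ∀ i, ∃ u v, u ≤ v ∧ Istar i = Finset.Icc u v)
    (hIsub : ∀ i, Istar i ⊆ Finset.Icc 1 p)
    (hLmax : ∀ i, (Istar i).card ≤ L)
    (hGmin : ∀ i j, i ≠ j → ∀ x ∈ Istar i, ∀ y ∈ Istar j, G ≤ Nat.dist x y)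
    (hGL : L ≤ G) (hs : 2 ^ (s + 1) ≤ G) :
    ∀ i j, i ≠ j → ∀ t1 t2 : Fin Snum,
      (seg t1 ∩ Istar i).Nonempty → (seg t2 ∩ Istar j).Nonempty →
      1 < Nat.dist t1.val t2.val := by
  intro i j hij t1 t2 h1 h2
  by_contra h
  push_neg at h
  obtain ⟨x, hx⟩ := h1
  obtain ⟨y, hy⟩ := h2
  rw [Finset.mem_inter, hseg t1, Finset.mem_Icc] at hx
  rw [Finset.mem_inter, hseg t2, Finset.mem_Icc] at hy
  have hGxy := hGmin i j hij x hx.2 y hy.2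
  have hpow : 1 ≤ 2 ^ s := Nat.one_le_two_pow
  have hb1 : b t1 + 1 ≤ a t1 + 2 ^ s := by
    have h1 := hsegcard t1
    rw [hseg t1, Nat.card_Icc] at h1
    have := hab t1; omega
  have hb2 : b t2 + 1 ≤ a t2 + 2 ^ s := by
    have h1 := hsegcard t2
    rw [hseg t2, Nat.card_Icc] at h1
    have := hab t2; omega
  have hG2 : 2 * 2 ^ s ≤ G := by
    have : 2 ^ (s + 1) = 2 * 2 ^ s := by ring
    omega
  have hdxy : Nat.dist x y = x - y + (y - x) := rfl
  have hdt : Nat.dist t1.val t2.val = t1.val - t2.val + (t2.val - t1.val) := rfl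
  rcases Nat.lt_trichotomy t1.val t2.val with hlt | heq | hgt
  · have ht2 : t2.val = t1.val + 1 := by omega
    have hlt2 : t1.val + 1 < Snum := ht2 ▸ t2.isLt
    have hc := hconsec t1 hlt2
    have : (⟨t1.val + 1, hlt2⟩ : Fin Snum) = t2 := Fin.ext ht2.symm
    rw [this] at hc
    omega
  · have : t1 = t2 := Fin.ext heq
    subst this
    omega
  · have ht1 : t1.val = t2.val + 1 := by omega
    have hlt2 : t2.val + 1 < Snum := ht1 ▸ t1.isLt
    have hc := hconsec t2 hlt2
    have : (⟨t2.val + 1, hlt2⟩ : Fin Snum) = t1 := Fin.ext ht1.symm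
    rw [this] at hc
    omega
end
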